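/- arXiv:2101.01365 — 6 statements merged into one kernel-verified Lean document; each statement's English description precedes it below -/
import Mathlib

section
/- Let n > 0 with consecutive-ones binary expansion exponents β_1 > ... > β_r ≥ 0 and partial sums n_k (with n_{r+1}=0). Fix k with β := β_k > 0, and let 1 ≤ s ≤ n satisfy n − s ≥ n_{k+1}. Then there exists an integer x with s ≤ x ≤ 2n − s and x ≡ 2^β (mod 2^{β+1}). -/
/-! The proof takes `x = n + (-1)^k n_{k+1}`. Splitting the expansion of `n` at index `k` gives
`x = A + (-1)^k 2^{β_k}`, where every term of `A` is a multiple of `2^{β_k + 1}` and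
`±2^{β_k} ≡ 2^{β_k} (mod 2^{β_k + 1})`. Since the exponents decrease, the tail satisfies
`0 ≤ n_{k+1}`, so `|x - n| = n_{k+1} ≤ n - s`. -/

/-- An alternating binary expansion of `n`: `n = ∑ i ∈ range r, (-1)^i * 2^(β i)`
with strictly decreasing nonnegative exponents `β 0 > β 1 > ⋯ > β (r-1) ≥ 0`. -/
def IsAltExpansion (n r : ℕ) (β : ℕ → ℕ) : Prop :=
  (∀ i j : ℕ, i < j → j < r → β j < β i) ∧
  (n : ℤ) = ∑ i ∈ Finset.range r, (-1 : ℤ) ^ i * 2 ^ (β i)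

/-- The consecutive-ones binary expansion: an alternating expansion of minimal length `r`. -/
def IsConsOnesExpansion (n r : ℕ) (β : ℕ → ℕ) : Prop :=
  IsAltExpansion n r β ∧ ∀ r' β', IsAltExpansion n r' β' → r ≤ r'

open Finset

def altTail (r : ℕ) (β : ℕ → ℕ) (k : ℕ) : ℤ :=
  ∑ i ∈ Ico k r, (-1 : ℤ) ^ (i - k) * 2 ^ β i

section AltTail

variable {r : ℕ} {β : ℕ → ℕ}

theorem altTail_of_le {k : ℕ} (hk : r ≤ k) : altTail r β k = 0 := by
  rw [altTail, Ico_eq_empty_of_le hk, sum_empty]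

theorem altTail_eq_sub {k : ℕ} (hk : k < r) :
    altTail r β k = 2 ^ β k - altTail r β (k + 1) := by
  rw [altTail, sum_eq_sum_Ico_succ_bot hk, Nat.sub_self, pow_zero, one_mul, altTail,
    sub_eq_add_neg, ← sum_neg_distrib]
  congr 1
  refine sum_congr rfl fun i hi => ?_
  rw [show i - k = i - (k + 1) + 1 by have := (mem_Ico.1 hi).1; omega, pow_succ]
  ring

theorem altTail_nonneg_and_le (hanti : ∀ i j, i < j → j < r → β j < β i) (k : ℕ) :
    0 ≤ altTail r β k ∧ altTail r β k ≤ 2 ^ β k := by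
  by_cases hk : k < r
  · have hnext : altTail r β (k + 1) ≤ 2 ^ β k := by
      by_cases hk' : k + 1 < r
      · calc altTail r β (k + 1) ≤ 2 ^ β (k + 1) := (altTail_nonneg_and_le hanti (k + 1)).2
          _ ≤ 2 ^ β k := pow_le_pow_right₀ one_le_two (hanti k (k + 1) k.lt_succ_self hk').le
      · rw [altTail_of_le (not_lt.1 hk')]
        positivity
    have := (altTail_nonneg_and_le hanti (k + 1)).1
    rw [altTail_eq_sub hk]
    constructor <;> linarith
  · rw [altTail_of_le (not_lt.1 hk)]
    exact ⟨le_rfl, by positivity⟩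
termination_by r - k

theorem sum_range_eq_add_altTail {k : ℕ} (hk : k ≤ r) :
    ∑ i ∈ range r, (-1 : ℤ) ^ i * 2 ^ β i =
      ∑ i ∈ range k, (-1 : ℤ) ^ i * 2 ^ β i + (-1) ^ k * altTail r β k := by
  rw [range_eq_Ico, ← sum_Ico_consecutive _ k.zero_le hk, ← range_eq_Ico, altTail, mul_sum]
  congr 1
  refine sum_congr rfl fun i hi => ?_
  rw [← mul_assoc, ← pow_add, Nat.add_sub_cancel' (mem_Ico.1 hi).1]

end AltTail

theorem neg_one_pow_mul_two_pow_modEq (k b : ℕ) :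
    (-1) ^ k * 2 ^ b ≡ 2 ^ b [ZMOD 2 ^ (b + 1)] := by
  rcases neg_one_pow_eq_or ℤ k with h | h
  · rw [h, one_mul]
  · rw [h, Int.modEq_iff_dvd, pow_succ]
    exact ⟨1, by ring⟩

theorem consOnes_mod_two_pow_exists_general (n r : ℕ) (β : ℕ → ℕ)
    (h : IsConsOnesExpansion n r β) (nk : ℕ → ℤ)
    (hnk : ∀ k, nk k = ∑ i ∈ Finset.Ico k r, (-1 : ℤ) ^ (i - k) * 2 ^ (β i))
    (k : ℕ) (hk : k < r)
    (s : ℕ) (hns : (n : ℤ) - s ≥ nk (k + 1)) :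
    ∃ x : ℤ, (s : ℤ) ≤ x ∧ x ≤ 2 * n - s ∧ x ≡ 2 ^ (β k) [ZMOD (2 ^ (β k + 1))] := by
  obtain ⟨⟨hanti, hn⟩, -⟩ := h
  obtain rfl : nk = altTail r β := funext hnk
  set A := ∑ i ∈ range k, (-1 : ℤ) ^ i * 2 ^ β i
  have hA : 2 ^ (β k + 1) ∣ A :=
    dvd_sum fun i hi => (pow_dvd_pow 2 (hanti i k (mem_range.1 hi) hk)).mul_left _
  have hsplit : (n : ℤ) + (-1) ^ k * altTail r β (k + 1) = A + (-1) ^ k * 2 ^ β k := by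
    rw [hn, sum_range_eq_add_altTail hk.le, altTail_eq_sub hk]
    ring
  have hdev : |(-1) ^ k * altTail r β (k + 1)| ≤ n - s := by
    rw [abs_mul, abs_neg_one_pow, one_mul, abs_of_nonneg (altTail_nonneg_and_le hanti _).1]
    exact hns
  refine ⟨n + (-1) ^ k * altTail r β (k + 1), ?_, ?_, ?_⟩
  · linarith [(abs_le.1 hdev).1]
  · linarith [(abs_le.1 hdev).2]
  · rw [hsplit]
    simpa using (Int.modEq_zero_iff_dvd.2 hA).add (neg_one_pow_mul_two_pow_modEq k (β k))

/-- Lemma `mod2b1calc`: if `β = β_k > 0` and `1 ≤ s ≤ n` with `n - s ≥ n_{k+1}`,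
then some `x` with `s ≤ x ≤ 2n - s` satisfies `x ≡ 2^β (mod 2^{β+1})`. -/
theorem consOnes_mod_two_pow_exists (n r : ℕ) (β : ℕ → ℕ) (hn : 0 < n)
    (h : IsConsOnesExpansion n r β) (nk : ℕ → ℤ)
    (hnk : ∀ k, nk k = ∑ i ∈ Finset.Ico k r, (-1 : ℤ) ^ (i - k) * 2 ^ (β i))
    (k : ℕ) (hk : k < r) (hβ : 0 < β k)
    (s : ℕ) (hs1 : 1 ≤ s) (hs2 : s ≤ n) (hns : (n : ℤ) - s ≥ nk (k + 1)) :
    ∃ x : ℤ, (s : ℤ) ≤ x ∧ x ≤ 2 * n - s ∧ x ≡ 2 ^ (β k) [ZMOD (2 ^ (β k + 1))] :=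
  consOnes_mod_two_pow_exists_general n r β h nk hnk k hk s hns
end

section
/- Let e : V → V be a nilpotent linear map on a vector space V, let z_1, ..., z_t be linearly independent vectors in the kernel of e, let k_1, ..., k_t ≥ 0 be integers, and let w_1, ..., w_t ∈ V satisfy e^{k_i} w_i = z_i for all i. Then the set {e^j w_i : 1 ≤ i ≤ t, 0 ≤ j ≤ k_i} is linearly independent. -/
/-!
Call `k i - j` the depth of `e^j (w i)`: `e^n` sends it to `z i` when `n` is its depth and to `0`
when `n` is larger. In a vanishing linear combination, apply `e^m`, where `m` is
the largest depth carrying a nonzero coefficient: the deeper vectors are killed, and what is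
left is a combination of distinct `z i` with the coefficients of depth `m`, so these vanish.
-/

open Finset

theorem linearIndependent_of_depth {R M N ι κ : Type*} [Ring R] [AddCommGroup M] [Module R M]
    [AddCommGroup N] [Module R N] [Fintype ι] [LinearOrder κ]
    (v : ι → M) (d : ι → κ) (f : κ → M →ₗ[R] N)
    (hf : ∀ n, LinearIndependent R (fun p : {p // d p = n} => f n (v p)))
    (hzero : ∀ p n, d p < n → f n (v p) = 0) :
    LinearIndependent R v := by
  classical
  rw [Fintype.linearIndependent_iff]
  intro g hg
  by_contra! ⟨q, hq⟩
  obtain ⟨p₀, hp₀, hmax⟩ := exists_max_image {p | g p ≠ 0} d ⟨q, mem_filter_univ q |>.mpr hq⟩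
  have hterm : ∀ p, g p • f (d p₀) (v p) = if d p = d p₀ then g p • f (d p₀) (v p) else 0 := by
    intro p
    rcases lt_trichotomy (d p) (d p₀) with hlt | heq | hgt
    · rw [if_neg hlt.ne, hzero p _ hlt, smul_zero]
    · rw [if_pos heq]
    · have : g p = 0 := by
        by_contra hp
        exact (hmax p (mem_filter_univ p |>.mpr hp)).not_gt hgt
      rw [if_neg hgt.ne', this, zero_smul]
  have htop : ∑ p : {p // d p = d p₀}, g p • f (d p₀) (v p) = 0 := by
    have hsum := congrArg (f (d p₀)) hg
    simp only [map_sum, map_smul, map_zero] at hsum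
    rwa [sum_congr rfl fun p _ => hterm p, ← sum_filter,
      sum_subtype _ fun p => mem_filter_univ p] at hsum
  exact (mem_filter_univ p₀).mp hp₀ <|
    Fintype.linearIndependent_iff.mp (hf (d p₀)) (fun p => g p) htop ⟨p₀, rfl⟩

section JordanChain

variable {R V : Type*} [Semiring R] [AddCommMonoid V] [Module R V]
  {e : V →ₗ[R] V} {z w : V} {k : ℕ}

theorem pow_apply_pow_apply_of_add_eq (hw : (e ^ k) w = z) {n j : ℕ} (h : n + j = k) :
    (e ^ n) ((e ^ j) w) = z := by
  rw [← Module.End.mul_apply, ← pow_add, h, hw]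

theorem pow_apply_pow_apply_of_lt_add (hz : e z = 0) (hw : (e ^ k) w = z) {n j : ℕ}
    (h : k < n + j) : (e ^ n) ((e ^ j) w) = 0 := by
  obtain ⟨r, hr⟩ := Nat.exists_eq_add_of_lt h
  rw [← Module.End.mul_apply, ← pow_add, hr, add_assoc, add_comm, pow_add, Module.End.mul_apply,
    hw, pow_succ, Module.End.mul_apply, hz, map_zero]

end JordanChain

theorem jordan_chains_linearIndependent_general {K V : Type*} [Field K] [AddCommGroup V]
    [Module K V] (e : V →ₗ[K] V)
    {t : ℕ} (z w : Fin t → V) (k : Fin t → ℕ)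
    (hz : LinearIndependent K z) (hker : ∀ i, e (z i) = 0)
    (hw : ∀ i, (e ^ (k i)) (w i) = z i) :
    LinearIndependent K
      (fun p : Σ i : Fin t, Fin (k i + 1) => (e ^ (p.2 : ℕ)) (w p.1)) := by
  refine linearIndependent_of_depth _ (fun p => k p.1 - p.2) (e ^ ·) (fun n => ?_) ?_
  · have hinj : Function.Injective fun p : {p : Σ i : Fin t, Fin (k i + 1) // k p.1 - p.2 = n} =>
        p.1.1 := by
      rintro ⟨⟨i, j⟩, hj⟩ ⟨⟨i', j'⟩, hj'⟩ (rfl : i = i')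
      congr; ext; simp only at hj hj'; omega
    have hfam : (fun p : {p : Σ i : Fin t, Fin (k i + 1) // k p.1 - p.2 = n} =>
        (e ^ n) ((e ^ (p.1.2 : ℕ)) (w p.1.1))) = z ∘ fun p => p.1.1 := by
      funext ⟨⟨i, j⟩, hj⟩
      exact pow_apply_pow_apply_of_add_eq (hw i) (by dsimp only at hj ⊢; omega)
    exact hfam ▸ hz.comp _ hinj
  · rintro ⟨i, j⟩ n hn
    exact pow_apply_pow_apply_of_lt_add (hker i) (hw i) (by dsimp only at hn ⊢; omega)

/-- Lemma on Jordan chains: if `e` is nilpotent, `z 1, …, z t` are linearly independent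
vectors in `ker e`, and `e^(k i) (w i) = z i` for each `i`, then the vectors
`e^j (w i)` for `1 ≤ i ≤ t`, `0 ≤ j ≤ k i` are linearly independent. -/
theorem jordan_chains_linearIndependent {K V : Type*} [Field K] [AddCommGroup V]
    [Module K V] [FiniteDimensional K V] (e : V →ₗ[K] V) (hnil : IsNilpotent e)
    {t : ℕ} (z w : Fin t → V) (k : Fin t → ℕ)
    (hz : LinearIndependent K z) (hker : ∀ i, e (z i) = 0)
    (hw : ∀ i, (e ^ (k i)) (w i) = z i) :
    LinearIndependent K
      (fun p : Σ i : Fin t, Fin (k i + 1) => (e ^ (p.2 : ℕ)) (w p.1)) :=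
  jordan_chains_linearIndependent_general e z w k hz hker hw
end

section
/- Let K be a field of characteristic 2, let e be the n×n nilpotent Jordan block acting on V = K^n with basis v_1,...,v_n where e v_1 = 0 and e v_i = v_{i−1}. Let e act on V ⊗ V by e ⊗ id + id ⊗ e. Then the vectors z_s := Σ_{i=1}^s v_i ⊗ v_{s+1−i}, for 1 ≤ s ≤ n, form a basis of the kernel of the action of e on V ⊗ V. -/
/-!
Read `x ∈ V ⊗ V` through its coefficients `c a b` on `v (a+1) ⊗ v (b+1)`, extended by zero to all
`a b : ℕ`. Then `e • x` has coefficients `c (a+1) b + c a (b+1)`, so in characteristic two `x` lies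
in the kernel iff `c` is constant along every antidiagonal `a + b = k`; as `c k 0 = 0` for `k ≥ n`,
this says `x = ∑_{k < n} c k 0 • z (k+1)`. Conversely `z s` has coefficient `1` exactly on the
antidiagonal `a + b + 1 = s`, so every coefficient of `e • z s` is `1 + 1 = 0`, and the coefficient
at `(t, 0)` of `∑ g s • z (s+1)` is `g t`, which gives linear independence.
-/

open TensorProduct

noncomputable section

variable (K : Type*) [Field K]

/-- The single nilpotent Jordan block of size `n` on `K^n`: sends the `i`-th
standard basis vector `v i` to `v (i-1)` (and `v 1` to `0`). -/
def jordanShift (n : ℕ) : (Fin n → K) →ₗ[K] (Fin n → K) where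
  toFun f := fun i => if h : (i : ℕ) + 1 < n then f ⟨(i : ℕ) + 1, h⟩ else 0
  map_add' f g := by funext i; by_cases h : (i : ℕ) + 1 < n <;> simp [h]
  map_smul' c f := by funext i; by_cases h : (i : ℕ) + 1 < n <;> simp [h]

/-- The basis vector `v j` of `K^n` for `1 ≤ j ≤ n`, with the convention
`v j = 0` for `j ≤ 0` or `j > n`. -/
def basisVec (n : ℕ) (j : ℤ) : Fin n → K :=
  if h : 1 ≤ j ∧ j ≤ (n : ℤ) then Pi.single (⟨(j - 1).toNat, by omega⟩ : Fin n) 1 else 0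

/-- The action `e ⊗ id + id ⊗ e` of the Jordan block `e` on `K^n ⊗ K^n`. -/
def tensorSquareAction (n : ℕ) :
    ((Fin n → K) ⊗[K] (Fin n → K)) →ₗ[K] ((Fin n → K) ⊗[K] (Fin n → K)) :=
  LinearMap.rTensor (Fin n → K) (jordanShift K n) +
    LinearMap.lTensor (Fin n → K) (jordanShift K n)

section Coordinates

variable (n : ℕ)

def coordNat (a : ℕ) : (Fin n → K) →ₗ[K] K :=
  if h : a < n then LinearMap.proj ⟨a, h⟩ else 0

lemma coordNat_apply (a : ℕ) (v : Fin n → K) :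
    coordNat K n a v = if h : a < n then v ⟨a, h⟩ else 0 := by
  unfold coordNat; split_ifs <;> rfl

lemma coordNat_comp_jordanShift (a : ℕ) :
    coordNat K n a ∘ₗ jordanShift K n = coordNat K n (a + 1) := by
  ext v
  simp only [LinearMap.comp_apply, coordNat_apply]
  by_cases ha : a < n
  · rw [dif_pos ha]; rfl
  · rw [dif_neg ha, dif_neg (by omega)]

lemma coordNat_basisVec (a : ℕ) (j : ℤ) :
    coordNat K n a (basisVec K n j) = if a < n ∧ j = a + 1 then 1 else 0 := by
  rw [coordNat_apply]
  unfold basisVec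
  by_cases ha : a < n
  · split_ifs <;> simp [Pi.single_apply, Fin.ext_iff] <;> omega
  · simp [ha]

def tensorCoord (a b : ℕ) : (Fin n → K) ⊗[K] (Fin n → K) →ₗ[K] K :=
  LinearMap.mul' K K ∘ₗ TensorProduct.map (coordNat K n a) (coordNat K n b)

@[simp]
lemma tensorCoord_tmul (a b : ℕ) (v w : Fin n → K) :
    tensorCoord K n a b (v ⊗ₜ w) = coordNat K n a v * coordNat K n b w := by
  simp [tensorCoord]

lemma tensorCoord_of_le_left {a : ℕ} (ha : n ≤ a) (b : ℕ) : tensorCoord K n a b = 0 := by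
  simp [tensorCoord, coordNat, show ¬ a < n by omega]

lemma tensorCoord_eq_repr (p q : Fin n) (x : (Fin n → K) ⊗[K] (Fin n → K)) :
    tensorCoord K n p q x =
      ((Pi.basisFun K (Fin n)).tensorProduct (Pi.basisFun K (Fin n))).repr x (p, q) := by
  induction x using TensorProduct.induction_on with
  | zero => simp
  | tmul v w => simp [coordNat_apply, mul_comm]
  | add x y hx hy => simp [hx, hy]

lemma ext_tensorCoord {x y : (Fin n → K) ⊗[K] (Fin n → K)}
    (h : ∀ a b, tensorCoord K n a b x = tensorCoord K n a b y) : x = y := by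
  refine ((Pi.basisFun K (Fin n)).tensorProduct (Pi.basisFun K (Fin n))).repr.injective ?_
  ext ⟨p, q⟩
  simpa only [tensorCoord_eq_repr] using h p q

lemma tensorCoord_comp_tensorSquareAction (a b : ℕ) :
    tensorCoord K n a b ∘ₗ tensorSquareAction K n =
      tensorCoord K n (a + 1) b + tensorCoord K n a (b + 1) := by
  simp [tensorCoord, tensorSquareAction, LinearMap.comp_add, LinearMap.comp_assoc,
    coordNat_comp_jordanShift]

end Coordinates

section Antidiagonal

variable (n : ℕ)

def antidiagonalVec (s : ℕ) : (Fin n → K) ⊗[K] (Fin n → K) :=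
  ∑ i ∈ Finset.Icc (1 : ℤ) (s : ℤ), basisVec K n i ⊗ₜ[K] basisVec K n ((s : ℤ) + 1 - i)

lemma tensorCoord_antidiagonalVec {s : ℕ} (hs : s ≤ n) (a b : ℕ) :
    tensorCoord K n a b (antidiagonalVec K n s) = if a + b + 1 = s then 1 else 0 := by
  simp only [antidiagonalVec, map_sum, tensorCoord_tmul, coordNat_basisVec, ite_zero_mul_ite_zero,
    one_mul]
  split_ifs with hab
  · rw [Finset.sum_eq_single_of_mem ((a : ℤ) + 1) (by simp; omega)]
    · rw [if_pos (by omega)]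
    · intro i _ hi
      rw [if_neg (by omega)]
  · exact Finset.sum_eq_zero fun i _ => if_neg (by omega)

lemma tensorSquareAction_antidiagonalVec [CharP K 2] {s : ℕ} (hs : s ≤ n) :
    tensorSquareAction K n (antidiagonalVec K n s) = 0 := by
  refine ext_tensorCoord K n fun a b => ?_
  rw [← LinearMap.comp_apply, tensorCoord_comp_tensorSquareAction, LinearMap.add_apply,
    tensorCoord_antidiagonalVec K n hs, tensorCoord_antidiagonalVec K n hs,
    show a + 1 + b = a + (b + 1) by omega, CharTwo.add_self_eq_zero, map_zero]

lemma tensorCoord_eq_of_mem_ker [CharP K 2] {x : (Fin n → K) ⊗[K] (Fin n → K)}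
    (hx : x ∈ LinearMap.ker (tensorSquareAction K n)) (a b : ℕ) :
    tensorCoord K n a b x = tensorCoord K n (a + b) 0 x := by
  have hshift (a b : ℕ) : tensorCoord K n a (b + 1) x = tensorCoord K n (a + 1) b x := by
    rw [eq_comm, ← CharTwo.add_eq_zero, ← LinearMap.add_apply,
      ← tensorCoord_comp_tensorSquareAction, LinearMap.comp_apply, LinearMap.mem_ker.mp hx,
      map_zero]
  induction b generalizing a with
  | zero => rfl
  | succ b ih => rw [hshift, ih, Nat.add_right_comm, Nat.add_assoc]

lemma tensorCoord_sum_smul_antidiagonalVec (g : Fin n → K) (a b : ℕ) :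
    tensorCoord K n a b (∑ s : Fin n, g s • antidiagonalVec K n (s + 1)) =
      if h : a + b < n then g ⟨a + b, h⟩ else 0 := by
  have hterm (s : Fin n) : tensorCoord K n a b (g s • antidiagonalVec K n (s + 1)) =
      if a + b = s then g s else 0 := by
    simp [tensorCoord_antidiagonalVec K n s.isLt, eq_comm]
  simp only [map_sum, hterm]
  split_ifs with h
  · rw [Finset.sum_eq_single_of_mem ⟨a + b, h⟩ (Finset.mem_univ _) fun s _ hs => if_neg ?_]
    · exact if_pos rfl
    · exact fun hab => hs (Fin.ext hab.symm)
  · exact Finset.sum_eq_zero fun s _ => if_neg fun hab : a + b = s => h (hab ▸ s.isLt)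

end Antidiagonal

/-- In characteristic two, the vectors `z s = ∑_{i=1}^s v i ⊗ v (s+1-i)`, `1 ≤ s ≤ n`,
form a basis of the kernel of `e ⊗ id + id ⊗ e` on `K^n ⊗ K^n`. -/
theorem kernel_tensorSquare_basis [CharP K 2] (n : ℕ)
    (z : ℕ → (Fin n → K) ⊗[K] (Fin n → K))
    (hz : ∀ s : ℕ, z s = ∑ i ∈ Finset.Icc (1 : ℤ) (s : ℤ),
      basisVec K n i ⊗ₜ[K] basisVec K n ((s : ℤ) + 1 - i)) :
    LinearIndependent K (fun s : Fin n => z ((s : ℕ) + 1)) ∧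
      Submodule.span K (Set.range (fun s : Fin n => z ((s : ℕ) + 1))) =
        LinearMap.ker (tensorSquareAction K n) := by
  obtain rfl : z = antidiagonalVec K n := funext hz
  refine ⟨Fintype.linearIndependent_iff.mpr fun g hg t => ?_, le_antisymm ?_ fun x hx => ?_⟩
  · simpa using (tensorCoord_sum_smul_antidiagonalVec K n g t 0).symm.trans
      congr(tensorCoord K n t 0 $hg)
  · rw [Submodule.span_le]
    rintro _ ⟨s, rfl⟩
    exact tensorSquareAction_antidiagonalVec K n s.isLt
  · have hx_eq : x = ∑ s : Fin n, tensorCoord K n s 0 x • antidiagonalVec K n (s + 1) := by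
      refine ext_tensorCoord K n fun a b => ?_
      rw [tensorCoord_sum_smul_antidiagonalVec, tensorCoord_eq_of_mem_ker K n hx]
      split_ifs with h
      · rfl
      · rw [tensorCoord_of_le_left K n (not_lt.mp h), LinearMap.zero_apply]
    rw [hx_eq]
    exact Submodule.sum_mem _ fun s _ => Submodule.smul_mem _ _ (Submodule.subset_span ⟨s, rfl⟩)

end
end

section
/- Let K be a field of characteristic 2 and let e act on W_n = K^n as a single nilpotent Jordan block, with consecutive-ones expansion n = Σ (-1)^{i+1} 2^{β_i} (β_1 > ... > β_r ≥ 0). For 1 ≤ k ≤ r define d_k := 2^{β_k} + Σ_{i=k+1}^r (-1)^{k+i} 2^{β_i + 1}. Then the nilpotent operator e ⊗ id + id ⊗ e on W_n ⊗ W_n has Jordan type consisting, for each 1 ≤ k ≤ r, of exactly d_k Jordan blocks of size 2^{β_k} (and no other blocks). -/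
open TensorProduct

noncomputable section

variable (K : Type*) [Field K]

/-- A nilpotent (or unipotent, after subtracting the identity) endomorphism `f` has
Jordan type `M` (the multiset of its Jordan block sizes) iff for every `m` the kernel
of `f ^ m` has dimension `∑_{s ∈ M} min s m`. -/
def HasJordanType {K V : Type*} [Field K] [AddCommGroup V] [Module K V]
    (f : V →ₗ[K] V) (M : Multiset ℕ) : Prop :=
  ∀ m : ℕ, Module.finrank K (LinearMap.ker (f ^ m)) = (M.map fun s => min s m).sum

/-!
Put `q = 2 ^ β₀` and `m = q - n`. In characteristic `p` the operators `f ⊗ 1` and `1 ⊗ g` commute,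
so `(f ⊗ 1 + 1 ⊗ g) ^ (p ^ t) = f ^ (p ^ t) ⊗ 1 + 1 ⊗ g ^ (p ^ t)`. On `V ⊗ W_q` a kernel vector of
`f ⊗ 1 + 1 ⊗ e` is determined by its `0`-th coordinate in `V`, so whenever `f ^ q = 0` the module
`V ⊗ W_q` is a sum of `dim V` Jordan blocks of size `q`. Since `W_n = W_q / W_m`, the space
`W_n ⊗ W_n` is the quotient of `W_q ⊗ W_q` by `A + B`, where `A = W_m ⊗ W_q`, `B = W_q ⊗ W_m` and
`A ∩ B = W_m ⊗ W_m`. For `T` a sum of Jordan blocks of size `q`, the range of `T ^ j` is the kernel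
of `T ^ (q - j)`, and counting kernels of `T ^ j` shows that `W_n ⊗ W_n` consists of `q - 2m` blocks
of size `q` together with the blocks of `W_m ⊗ W_m`. Finally, the consecutive-ones expansion of `m`
is that of `n` with its leading term removed, `d₀ = q - 2m`, and the remaining `d_k` are those of
`m`, so the theorem follows by induction on `n`.
-/

open Module LinearMap

section LinearAlgebra

variable {K} {U U' V W : Type*} [AddCommGroup U] [Module K U] [AddCommGroup U'] [Module K U']
  [AddCommGroup V] [Module K V] [AddCommGroup W] [Module K W]

theorem Submodule.finrank_map_add_finrank_inf_ker [FiniteDimensional K V] (f : V →ₗ[K] W)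
    (p : Submodule K V) :
    finrank K (p.map f) + finrank K ↥(p ⊓ ker f) = finrank K p := by
  rw [← range_domRestrict, ← Submodule.map_comap_subtype, ← ker_domRestrict,
    Submodule.finrank_map_subtype_eq]
  exact finrank_range_add_finrank_ker _

theorem Submodule.finrank_comap_eq_finrank_ker_add [FiniteDimensional K V] (f : V →ₗ[K] W)
    (q : Submodule K W) :
    finrank K (q.comap f) = finrank K (ker f) + finrank K ↥(q ⊓ range f) := by
  have hker : q.comap f ⊓ ker f = ker f := inf_eq_right.mpr (comap_mono bot_le)
  have := (q.comap f).finrank_map_add_finrank_inf_ker f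
  rw [Submodule.map_comap_eq, hker, inf_comm] at this
  omega

theorem LinearMap.finrank_ker_pow_add_le [FiniteDimensional K V] (f : Module.End K V) (i j : ℕ) :
    finrank K (ker (f ^ (i + j))) ≤ finrank K (ker (f ^ i)) + finrank K (ker (f ^ j)) := by
  rw [pow_add, Module.End.mul_eq_comp, ker_comp, Submodule.finrank_comap_eq_finrank_ker_add]
  have := Submodule.finrank_mono (inf_le_left : ker (f ^ i) ⊓ range (f ^ j) ≤ _)
  omega

theorem hasJordanType_replicate_iff {f : Module.End K V} {c q : ℕ} :
    HasJordanType f (Multiset.replicate c q) ↔ ∀ j, finrank K (ker (f ^ j)) = c * min q j := by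
  simp [HasJordanType]

theorem hasJordanType_zero_of_finrank_eq_zero [FiniteDimensional K V] (hV : finrank K V = 0)
    (f : Module.End K V) : HasJordanType f 0 :=
  fun _ => Nat.eq_zero_of_le_zero ((Submodule.finrank_le _).trans hV.le)

theorem HasJordanType.of_pow_eq_zero {f : Module.End K V} {M : Multiset ℕ} {q : ℕ}
    (hq : f ^ q = 0) (hM : ∀ s ∈ M, s ≤ q)
    (h : ∀ j ≤ q, finrank K (ker (f ^ j)) = (M.map fun s => min s j).sum) :
    HasJordanType f M := by
  intro j
  rcases le_total j q with hj | hj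
  · exact h j hj
  · rw [pow_eq_zero_of_le hj hq, ← hq, h q le_rfl]
    congr 1
    exact Multiset.map_congr rfl fun s hs => by simp [hM s hs, hj.trans' (hM s hs)]

theorem hasJordanType_replicate_of_pow_eq_zero [FiniteDimensional K V] {f : Module.End K V}
    {c q : ℕ} (hq : f ^ q = 0) (hV : finrank K V = c * q) (hker : finrank K (ker f) ≤ c) :
    HasJordanType f (Multiset.replicate c q) := by
  have hle : ∀ j, finrank K (ker (f ^ j)) ≤ c * j := by
    intro j
    induction j with
    | zero => simp [Module.End.one_eq_id]
    | succ j ih =>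
      have := f.finrank_ker_pow_add_le j 1
      rw [pow_one] at this
      rw [mul_add_one]
      omega
  refine .of_pow_eq_zero hq (fun s hs => (Multiset.eq_of_mem_replicate hs).le) fun j hj => ?_
  simp only [Multiset.map_replicate, Multiset.sum_replicate, smul_eq_mul, min_eq_right hj]
  have htop : finrank K (ker (f ^ q)) = c * q := by rw [hq, ker_zero, finrank_top, hV]
  have hsplit := f.finrank_ker_pow_add_le j (q - j)
  rw [Nat.add_sub_cancel' hj, htop] at hsplit
  have := hle (q - j)
  have := hle j
  have : c * q = c * j + c * (q - j) := by rw [← mul_add, Nat.add_sub_cancel' hj]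
  omega

theorem LinearMap.map_ker_pow_eq_range_inf {φ : U →ₗ[K] V} (hφ : Function.Injective φ)
    {f : Module.End K U} {T : Module.End K V} (h : T ∘ₗ φ = φ ∘ₗ f) (j : ℕ) :
    (ker (f ^ j)).map φ = range φ ⊓ ker (T ^ j) := by
  rw [← ker_comp_of_ker_eq_bot (f ^ j) (ker_eq_bot.mpr hφ),
    ← Module.End.commute_pow_left_of_commute h j, ker_comp, Submodule.map_comap_eq]

theorem LinearMap.finrank_range_inf_ker_pow {φ : U →ₗ[K] V} (hφ : Function.Injective φ)
    {f : Module.End K U} {T : Module.End K V} (h : T ∘ₗ φ = φ ∘ₗ f) (j : ℕ) :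
    finrank K ↥(range φ ⊓ ker (T ^ j)) = finrank K (ker (f ^ j)) := by
  rw [← map_ker_pow_eq_range_inf hφ h]
  exact (LinearEquiv.finrank_eq (Submodule.equivMapOfInjective φ hφ _)).symm

theorem HasJordanType.of_linearEquiv {f : Module.End K U} {T : Module.End K V} {M : Multiset ℕ}
    (hf : HasJordanType f M) (e : U ≃ₗ[K] V) (h : T ∘ₗ e = e ∘ₗ f) : HasJordanType T M := by
  intro j
  rw [← hf j, ← finrank_range_inf_ker_pow e.injective h, LinearEquiv.range, top_inf_eq]

theorem LinearMap.finrank_ker_pow_add_finrank_ker_of_surjective [FiniteDimensional K V]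
    {π : V →ₗ[K] W} (hπ : Function.Surjective π) {T : Module.End K V} {T' : Module.End K W}
    (h : T' ∘ₗ π = π ∘ₗ T) (j : ℕ) :
    finrank K (ker (T' ^ j)) + finrank K (ker π) = finrank K ((ker π).comap (T ^ j)) := by
  have hcomap : (ker π).comap (T ^ j) = (ker (T' ^ j)).comap π := by
    rw [← ker_comp, ← ker_comp, Module.End.commute_pow_left_of_commute h j]
  have := ((ker (T' ^ j)).comap π).finrank_map_add_finrank_inf_ker π
  rwa [Submodule.map_comap_eq_of_surjective hπ, inf_eq_right.mpr (ker_le_comap π),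
    ← hcomap] at this

theorem HasJordanType.range_pow_eq_ker_pow [FiniteDimensional K V] {f : Module.End K V}
    {c q j : ℕ} (hf : HasJordanType f (Multiset.replicate c q)) (hq : f ^ q = 0) (hj : j ≤ q) :
    range (f ^ (q - j)) = ker (f ^ j) := by
  rw [hasJordanType_replicate_iff] at hf
  refine Submodule.eq_of_le_of_finrank_eq (range_le_ker_iff.mpr ?_) ?_
  · rw [← Module.End.mul_eq_comp, ← pow_add, Nat.add_sub_cancel' hj, hq]
  · have htop : finrank K V = c * q := by
      have := hf q
      rwa [hq, ker_zero, finrank_top, min_self] at this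
    have := finrank_range_add_finrank_ker (f ^ (q - j))
    rw [hf, htop, min_eq_right (Nat.sub_le q j)] at this
    rw [hf, min_eq_right hj]
    have : c * q = c * j + c * (q - j) := by rw [← mul_add, Nat.add_sub_cancel' hj]
    omega

theorem HasJordanType.map_range_pow_eq_range_inf_ker_pow [FiniteDimensional K U]
    {φ : U →ₗ[K] V} (hφ : Function.Injective φ) {f : Module.End K U} {T : Module.End K V}
    (h : T ∘ₗ φ = φ ∘ₗ f) {c q j : ℕ} (hf : HasJordanType f (Multiset.replicate c q))
    (hq : f ^ q = 0) (hj : j ≤ q) :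
    (range φ).map (T ^ (q - j)) = range φ ⊓ ker (T ^ j) := by
  rw [← map_ker_pow_eq_range_inf hφ h, ← hf.range_pow_eq_ker_pow hq hj, ← range_comp,
    Module.End.commute_pow_left_of_commute h, range_comp]

theorem HasJordanType.finrank_ker_pow_add_finrank_map_of_surjective [FiniteDimensional K V]
    {T : Module.End K V} {c q j : ℕ} (hT : HasJordanType T (Multiset.replicate c q))
    (hq : T ^ q = 0) (hj : j ≤ q) {π : V →ₗ[K] W} (hπ : Function.Surjective π)
    {T' : Module.End K W} (h : T' ∘ₗ π = π ∘ₗ T) :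
    finrank K (ker (T' ^ j)) + finrank K ((ker π).map (T ^ (q - j))) =
      finrank K (ker (T ^ j)) := by
  have hquot := finrank_ker_pow_add_finrank_ker_of_surjective hπ h j
  have hrange : range (T ^ j) = ker (T ^ (q - j)) := by
    simpa [Nat.sub_sub_self hj] using hT.range_pow_eq_ker_pow hq (Nat.sub_le q j)
  rw [Submodule.finrank_comap_eq_finrank_ker_add, hrange] at hquot
  have := (ker π).finrank_map_add_finrank_inf_ker (T ^ (q - j))
  omega

theorem HasJordanType.finrank_map_sup_add_finrank_inf_ker [FiniteDimensional K U]
    [FiniteDimensional K U'] {T : Module.End K V} {q j : ℕ} (hj : j ≤ q)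
    {φ : U →ₗ[K] V} (hφ : Function.Injective φ) {f : Module.End K U} (hφf : T ∘ₗ φ = φ ∘ₗ f)
    {a : ℕ} (hf : HasJordanType f (Multiset.replicate a q)) (hfq : f ^ q = 0)
    {ψ : U' →ₗ[K] V} (hψ : Function.Injective ψ) {g : Module.End K U'} (hψg : T ∘ₗ ψ = ψ ∘ₗ g)
    {b : ℕ} (hg : HasJordanType g (Multiset.replicate b q)) (hgq : g ^ q = 0) :
    finrank K ((range φ ⊔ range ψ).map (T ^ (q - j))) +
        finrank K ↥(range φ ⊓ range ψ ⊓ ker (T ^ j)) = a * j + b * j := by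
  rw [Submodule.map_sup, hf.map_range_pow_eq_range_inf_ker_pow hφ hφf hfq hj,
    hg.map_range_pow_eq_range_inf_ker_pow hψ hψg hgq hj]
  have hinf : range φ ⊓ ker (T ^ j) ⊓ (range ψ ⊓ ker (T ^ j)) =
      range φ ⊓ range ψ ⊓ ker (T ^ j) := by
    rw [inf_inf_inf_comm, inf_idem]
  rw [← hinf, Submodule.finrank_sup_add_finrank_inf_eq, finrank_range_inf_ker_pow hφ hφf,
    finrank_range_inf_ker_pow hψ hψg, hasJordanType_replicate_iff.mp hf,
    hasJordanType_replicate_iff.mp hg, min_eq_right hj]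

theorem range_rTensor_inf_range_lTensor [FiniteDimensional K V] {ι : U →ₗ[K] V}
    {π : V →ₗ[K] W} (hι : Function.Injective ι) (hexact : Function.Exact ι π)
    (hπ : Function.Surjective π) :
    range (ι.rTensor V) ⊓ range (ι.lTensor V) = range (map ι ι) := by
  have := Module.Finite.of_injective ι hι
  have := Module.Finite.of_surjective π hπ
  have hdim : finrank K U + finrank K W = finrank K V := by
    have := finrank_range_add_finrank_ker π
    rw [range_eq_top.mpr hπ, finrank_top, hexact.linearMap_ker_eq, finrank_range_of_inj hι] at this
    omega
  have hA : finrank K (range (ι.rTensor V)) = finrank K U * finrank K V := by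
    rw [finrank_range_of_inj (Module.Flat.rTensor_preserves_injective_linearMap ι hι),
      Module.finrank_tensorProduct]
  have hB : finrank K (range (ι.lTensor V)) = finrank K V * finrank K U := by
    rw [finrank_range_of_inj (Module.Flat.lTensor_preserves_injective_linearMap ι hι),
      Module.finrank_tensorProduct]
  have hsup : finrank K ↥(range (ι.rTensor V) ⊔ range (ι.lTensor V)) +
      finrank K W * finrank K W = finrank K V * finrank K V := by
    have := finrank_range_add_finrank_ker (map π π)
    rwa [range_eq_top.mpr (TensorProduct.map_surjective hπ hπ), finrank_top,
      TensorProduct.map_ker hexact hπ hexact hπ, sup_comm, Module.finrank_tensorProduct,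
      Module.finrank_tensorProduct, add_comm] at this
  have hC : finrank K (range (map ι ι)) = finrank K U * finrank K U := by
    rw [finrank_range_of_inj (TensorProduct.map_injective_of_flat_flat ι ι hι hι),
      Module.finrank_tensorProduct]
  have hinf := Submodule.finrank_sup_add_finrank_inf_eq (range (ι.rTensor V)) (range (ι.lTensor V))
  refine (Submodule.eq_of_le_of_finrank_eq (le_inf ?_ ?_) ?_).symm
  · rw [← rTensor_comp_lTensor]
    exact range_comp_le_range _ _
  · rw [← lTensor_comp_rTensor]
    exact range_comp_le_range _ _
  · rw [← hdim] at hA hB hsup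
    nlinarith

end LinearAlgebra

section KroneckerSum

variable {K} {U U' V V' : Type*} [AddCommGroup U] [Module K U] [AddCommGroup U'] [Module K U']
  [AddCommGroup V] [Module K V] [AddCommGroup V'] [Module K V']

def kroneckerSum (f : Module.End K V) (g : Module.End K V') : Module.End K (V ⊗[K] V') :=
  f.rTensor V' + g.lTensor V

theorem kroneckerSum_tmul (f : Module.End K V) (g : Module.End K V') (x : V) (y : V') :
    kroneckerSum f g (x ⊗ₜ y) = f x ⊗ₜ y + x ⊗ₜ g y := rfl

theorem kroneckerSum_pow_prime_pow {p : ℕ} [CharP K p] (hp : p.Prime) (f : Module.End K V)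
    (g : Module.End K V') (t : ℕ) :
    kroneckerSum f g ^ p ^ t = kroneckerSum (f ^ p ^ t) (g ^ p ^ t) := by
  have hcomm : Commute (f.rTensor V') (g.lTensor V) :=
    (rTensor_comp_lTensor (f := f) (g := g)).trans (lTensor_comp_rTensor (f := f) (g := g)).symm
  have hp0 : (p : Module.End K (V ⊗[K] V')) = 0 := by
    rw [← map_natCast (algebraMap K _), CharP.cast_eq_zero, map_zero]
  rw [kroneckerSum, hcomm.add_pow_prime_pow_eq hp, hp0, zero_mul, zero_mul, zero_mul, add_zero,
    rTensor_pow, lTensor_pow, kroneckerSum]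

theorem kroneckerSum_pow_eq_zero {p : ℕ} [CharP K p] (hp : p.Prime) {f : Module.End K V}
    {g : Module.End K V'} {t : ℕ} (hf : f ^ p ^ t = 0) (hg : g ^ p ^ t = 0) :
    kroneckerSum f g ^ p ^ t = 0 := by
  rw [kroneckerSum_pow_prime_pow hp, hf, hg, kroneckerSum, rTensor_zero, lTensor_zero, add_zero]

theorem kroneckerSum_comp_map {f : Module.End K U} {g : Module.End K U'} {f' : Module.End K V}
    {g' : Module.End K V'} {φ : U →ₗ[K] V} {ψ : U' →ₗ[K] V'} (hφ : f' ∘ₗ φ = φ ∘ₗ f)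
    (hψ : g' ∘ₗ ψ = ψ ∘ₗ g) :
    kroneckerSum f' g' ∘ₗ map φ ψ = map φ ψ ∘ₗ kroneckerSum f g := by
  ext x y
  have hx : f' (φ x) = φ (f x) := LinearMap.congr_fun hφ x
  have hy : g' (ψ y) = ψ (g y) := LinearMap.congr_fun hψ y
  simp [kroneckerSum_tmul, hx, hy]

theorem kroneckerSum_comp_comm (f : Module.End K V) (g : Module.End K V') :
    kroneckerSum g f ∘ₗ (TensorProduct.comm K V V').toLinearMap =
      (TensorProduct.comm K V V').toLinearMap ∘ₗ kroneckerSum f g := by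
  ext x y
  simp [kroneckerSum_tmul, add_comm]

theorem kroneckerSum_comp_rTensor {f : Module.End K U} {f' : Module.End K V}
    {g : Module.End K V'} {φ : U →ₗ[K] V} (hφ : f' ∘ₗ φ = φ ∘ₗ f) :
    kroneckerSum f' g ∘ₗ φ.rTensor V' = φ.rTensor V' ∘ₗ kroneckerSum f g :=
  kroneckerSum_comp_map hφ (by rw [comp_id, id_comp])

theorem kroneckerSum_comp_lTensor {f : Module.End K V} {g : Module.End K U}
    {g' : Module.End K V'} {ψ : U →ₗ[K] V'} (hψ : g' ∘ₗ ψ = ψ ∘ₗ g) :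
    kroneckerSum f g' ∘ₗ ψ.lTensor V = ψ.lTensor V ∘ₗ kroneckerSum f g :=
  kroneckerSum_comp_map (by rw [comp_id, id_comp]) hψ

end KroneckerSum

section JordanBlock

variable {K} {V : Type*} [AddCommGroup V] [Module K V]

theorem jordanShift_pow_apply (n k : ℕ) (f : Fin n → K) (i : Fin n) :
    (jordanShift K n ^ k) f i = if h : (i : ℕ) + k < n then f ⟨i + k, h⟩ else 0 := by
  induction k generalizing f with
  | zero => simp
  | succ k ih =>
    rw [pow_succ, Module.End.mul_apply, ih]
    simp only [jordanShift, LinearMap.coe_mk, AddHom.coe_mk, ← add_assoc]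
    split_ifs <;> first | rfl | omega

theorem jordanShift_pow_self (n : ℕ) : jordanShift K n ^ n = 0 := by
  ext f i
  simp [jordanShift_pow_apply]

theorem finrank_ker_kroneckerSum_jordanShift_le [FiniteDimensional K V] (f : Module.End K V)
    (b : ℕ) : finrank K (ker (kroneckerSum f (jordanShift K b))) ≤ finrank K V := by
  let ψ := TensorProduct.piScalarRight K K V (Fin b)
  have hψ : ∀ x (i : Fin b), ψ (kroneckerSum f (jordanShift K b) x) i =
      f (ψ x i) + if h : (i : ℕ) + 1 < b then ψ x ⟨i + 1, h⟩ else 0 := by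
    intro x i
    induction x using TensorProduct.induction_on with
    | zero => simp
    | tmul x y =>
      simp only [kroneckerSum_tmul, map_add, Pi.add_apply, ψ, piScalarRight_apply,
        piScalarRightHom_tmul, map_smul, jordanShift, LinearMap.coe_mk, AddHom.coe_mk]
      split_ifs <;> simp
    | add x y hx hy =>
      simp only [map_add, Pi.add_apply, hx, hy]
      split_ifs <;> abel
  rcases Nat.eq_zero_or_pos b with rfl | hb
  · exact (Submodule.finrank_le _).trans (by simp [Module.finrank_tensorProduct])
  let ev : ker (kroneckerSum f (jordanShift K b)) →ₗ[K] V :=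
    (LinearMap.proj ⟨0, hb⟩ ∘ₗ ψ.toLinearMap) ∘ₗ Submodule.subtype _
  refine LinearMap.finrank_le_finrank_of_injective (f := ev) ?_
  rw [← ker_eq_bot, eq_bot_iff]
  rintro ⟨x, hx⟩ hx0
  have hzero : ∀ i (hi : i < b), ψ x ⟨i, hi⟩ = 0 := by
    intro i
    induction i with
    | zero => exact fun _ => hx0
    | succ i ih =>
      intro hi
      have := congrFun (congrArg ψ (mem_ker.mp hx)) ⟨i, by omega⟩
      rw [hψ, ih (by omega), map_zero, zero_add, dif_pos hi] at this
      simpa using this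
  simp only [Submodule.mem_bot, Submodule.mk_eq_zero]
  exact ψ.injective (funext fun i => by simpa using hzero i i.2)

theorem hasJordanType_kroneckerSum_jordanShift {p : ℕ} [CharP K p] (hp : p.Prime)
    [FiniteDimensional K V] {f : Module.End K V} {t : ℕ} (hf : f ^ p ^ t = 0) :
    HasJordanType (kroneckerSum f (jordanShift K (p ^ t)))
      (Multiset.replicate (finrank K V) (p ^ t)) :=
  hasJordanType_replicate_of_pow_eq_zero (kroneckerSum_pow_eq_zero hp hf (jordanShift_pow_self _))
    (by simp [Module.finrank_tensorProduct]) (finrank_ker_kroneckerSum_jordanShift_le f _)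

theorem hasJordanType_jordanShift_kroneckerSum {p : ℕ} [CharP K p] (hp : p.Prime)
    [FiniteDimensional K V] {f : Module.End K V} {t : ℕ} (hf : f ^ p ^ t = 0) :
    HasJordanType (kroneckerSum (jordanShift K (p ^ t)) f)
      (Multiset.replicate (finrank K V) (p ^ t)) :=
  (hasJordanType_kroneckerSum_jordanShift hp hf).of_linearEquiv (TensorProduct.comm K _ _)
    (kroneckerSum_comp_comm _ _)

variable (K) in
def jordanIncl (m n : ℕ) : (Fin m → K) →ₗ[K] (Fin (m + n) → K) where
  toFun f i := if h : (i : ℕ) < m then f ⟨i, h⟩ else 0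
  map_add' f g := by funext i; by_cases h : (i : ℕ) < m <;> simp [h]
  map_smul' c f := by funext i; by_cases h : (i : ℕ) < m <;> simp [h]

variable (K) in
def jordanProj (m n : ℕ) : (Fin (m + n) → K) →ₗ[K] (Fin n → K) :=
  LinearMap.funLeft K K (Fin.natAdd m)

theorem jordanShift_comp_jordanIncl (m n : ℕ) :
    jordanShift K (m + n) ∘ₗ jordanIncl K m n = jordanIncl K m n ∘ₗ jordanShift K m := by
  ext f i
  simp only [jordanShift, jordanIncl, LinearMap.coe_comp, LinearMap.coe_mk, AddHom.coe_mk,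
    Function.comp_apply]
  split_ifs <;> first | rfl | omega

theorem jordanShift_comp_jordanProj (m n : ℕ) :
    jordanShift K n ∘ₗ jordanProj K m n = jordanProj K m n ∘ₗ jordanShift K (m + n) := by
  ext f i
  simp only [jordanShift, jordanProj, LinearMap.coe_comp, LinearMap.coe_mk, AddHom.coe_mk,
    Function.comp_apply, LinearMap.funLeft_apply, Fin.natAdd]
  split_ifs <;> first | rfl | omega

theorem jordanIncl_injective (m n : ℕ) : Function.Injective (jordanIncl K m n) := by
  intro f g h
  funext i
  simpa [jordanIncl] using congrFun h (Fin.castAdd n i)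

theorem jordanProj_surjective (m n : ℕ) : Function.Surjective (jordanProj K m n) :=
  LinearMap.funLeft_surjective_of_injective _ _ _ (Fin.natAdd_injective n m)

theorem exact_jordanIncl_jordanProj (m n : ℕ) :
    Function.Exact (jordanIncl K m n) (jordanProj K m n) := by
  intro f
  constructor
  · intro hf
    refine ⟨fun i => f (Fin.castAdd n i), funext fun i => ?_⟩
    by_cases hi : (i : ℕ) < m
    · simp [jordanIncl, hi]
    · have := congrFun hf ⟨i - m, by omega⟩
      simp only [jordanProj, LinearMap.funLeft_apply, Pi.zero_apply] at this
      simp only [jordanIncl, LinearMap.coe_mk, AddHom.coe_mk, hi, dite_false]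
      rw [← this]
      congr 1
      ext
      simp
      omega
  · rintro ⟨g, rfl⟩
    funext i
    simp [jordanIncl, jordanProj]

end JordanBlock

section Recursion

variable {K}

theorem tensorSquareAction_eq_kroneckerSum (n : ℕ) :
    tensorSquareAction K n = kroneckerSum (jordanShift K n) (jordanShift K n) := rfl

theorem finrank_ker_tensorSquareAction_pow_add {p : ℕ} [CharP K p] (hp : p.Prime) {m n t : ℕ}
    (hq : m + n = p ^ t) {j : ℕ} (hj : j ≤ p ^ t) :
    finrank K (ker (tensorSquareAction K n ^ j)) + 2 * m * j =
      p ^ t * j + finrank K (ker (tensorSquareAction K m ^ j)) := by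
  have hm : jordanShift K m ^ p ^ t = 0 := pow_eq_zero_of_le (by omega) (jordanShift_pow_self m)
  have he : jordanShift K (p ^ t) ^ p ^ t = 0 := jordanShift_pow_self _
  have hqm := hasJordanType_jordanShift_kroneckerSum hp hm
  have hmq := hasJordanType_kroneckerSum_jordanShift hp hm
  have hqq := hasJordanType_kroneckerSum_jordanShift hp he
  have hqm0 := kroneckerSum_pow_eq_zero hp he hm
  have hmq0 := kroneckerSum_pow_eq_zero hp hm he
  have hqq0 := kroneckerSum_pow_eq_zero hp he he
  rw [← hq] at hj hqm hmq hqq hqm0 hmq0 hqq0 ⊢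
  rw [Module.finrank_fin_fun] at hqm hmq hqq
  have hι := jordanShift_comp_jordanIncl (K := K) m n
  have hπ := jordanShift_comp_jordanProj (K := K) m n
  have hexact := exact_jordanIncl_jordanProj (K := K) m n
  have hquot := hqq.finrank_ker_pow_add_finrank_map_of_surjective hqq0 hj
    (TensorProduct.map_surjective (jordanProj_surjective m n) (jordanProj_surjective m n))
    (kroneckerSum_comp_map hπ hπ)
  rw [TensorProduct.map_ker hexact (jordanProj_surjective m n) hexact
    (jordanProj_surjective m n), hasJordanType_replicate_iff.mp hqq, min_eq_right hj] at hquot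
  have hsup := hqm.finrank_map_sup_add_finrank_inf_ker hj
    (Module.Flat.lTensor_preserves_injective_linearMap _ (jordanIncl_injective m n))
    (kroneckerSum_comp_lTensor hι) hqm0
    (Module.Flat.rTensor_preserves_injective_linearMap _ (jordanIncl_injective m n))
    (kroneckerSum_comp_rTensor hι) hmq hmq0
  rw [inf_comm (range _), range_rTensor_inf_range_lTensor (jordanIncl_injective m n) hexact
    (jordanProj_surjective m n), finrank_range_inf_ker_pow
    (TensorProduct.map_injective_of_flat_flat _ _ (jordanIncl_injective m n)
      (jordanIncl_injective m n)) (kroneckerSum_comp_map hι hι)] at hsup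
  rw [tensorSquareAction_eq_kroneckerSum, tensorSquareAction_eq_kroneckerSum]
  have : 2 * m * j = m * j + m * j := by ring
  omega

theorem HasJordanType.tensorSquareAction_of_add_eq_prime_pow {p : ℕ} [CharP K p]
    (hp : p.Prime) {m n t : ℕ} (hq : m + n = p ^ t) (hmn : m ≤ n) {M : Multiset ℕ}
    (hM : HasJordanType (tensorSquareAction K m) M) (hMq : ∀ s ∈ M, s ≤ p ^ t) :
    HasJordanType (tensorSquareAction K n) (Multiset.replicate (p ^ t - 2 * m) (p ^ t) + M) := by
  have hnq : jordanShift K n ^ p ^ t = 0 := pow_eq_zero_of_le (by omega) (jordanShift_pow_self n)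
  refine .of_pow_eq_zero (kroneckerSum_pow_eq_zero hp hnq hnq) (fun s hs => ?_) fun j hj => ?_
  · rcases Multiset.mem_add.mp hs with hs | hs
    · exact (Multiset.eq_of_mem_replicate hs).le
    · exact hMq s hs
  · have hrec := finrank_ker_tensorSquareAction_pow_add (K := K) hp hq hj
    rw [hM j] at hrec
    simp only [Multiset.map_add, Multiset.sum_add, Multiset.map_replicate, Multiset.sum_replicate,
      smul_eq_mul, min_eq_right hj]
    have : (p ^ t - 2 * m) * j + 2 * m * j = p ^ t * j := by
      rw [← add_mul, Nat.sub_add_cancel (by omega)]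
    omega

end Recursion

section ConsOnesExpansion

def altSum (β : ℕ → ℕ) (r : ℕ) : ℤ :=
  ∑ i ∈ Finset.range r, (-1) ^ i * 2 ^ β i

theorem altSum_succ (β : ℕ → ℕ) (r : ℕ) :
    altSum β (r + 1) = 2 ^ β 0 - altSum (fun i => β (i + 1)) r := by
  simp only [altSum, Finset.sum_range_succ', pow_succ, pow_zero, one_mul, mul_neg_one, neg_mul,
    Finset.sum_neg_distrib]
  ring

theorem altSum_tail_nonneg_and_two_mul_le {β : ℕ → ℕ} {r : ℕ}
    (hβ : ∀ i j, i < j → j < r + 1 → β j < β i) :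
    0 ≤ altSum (fun i => β (i + 1)) r ∧ 2 * altSum (fun i => β (i + 1)) r ≤ 2 ^ β 0 := by
  induction r generalizing β with
  | zero => simp [altSum]
  | succ r ih =>
    obtain ⟨h0, h2⟩ := ih (β := fun i => β (i + 1)) fun i j hij hj => hβ _ _ (by omega) (by omega)
    have hpow : (2 : ℤ) * 2 ^ β 1 ≤ 2 ^ β 0 := by
      rw [← pow_succ']
      exact pow_le_pow_right₀ (by norm_num) (hβ 0 1 (by omega) (by omega))
    rw [altSum_succ]
    constructor <;> linarith

theorem isAltExpansion_two_pow (b : ℕ) : IsAltExpansion (2 ^ b) 1 fun _ => b :=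
  ⟨fun i j hij hj => by omega, by simp⟩

theorem IsAltExpansion.tail {n r : ℕ} {β : ℕ → ℕ} (h : IsAltExpansion n (r + 1) β) :
    n ≤ 2 ^ β 0 ∧ 2 ^ β 0 ≤ 2 * n ∧ IsAltExpansion (2 ^ β 0 - n) r fun i => β (i + 1) := by
  obtain ⟨hβ, hn⟩ := h
  change (n : ℤ) = altSum β (r + 1) at hn
  rw [altSum_succ] at hn
  obtain ⟨h0, h2⟩ := altSum_tail_nonneg_and_two_mul_le hβ
  have hle : n ≤ 2 ^ β 0 := by exact_mod_cast (show (n : ℤ) ≤ 2 ^ β 0 by linarith)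
  refine ⟨hle, by exact_mod_cast (show (2 : ℤ) ^ β 0 ≤ 2 * n by linarith),
    fun i j hij hj => hβ _ _ (by omega) (by omega), ?_⟩
  change _ = altSum _ r
  push_cast [hle]
  linarith

theorem IsAltExpansion.cons {m r b : ℕ} {β : ℕ → ℕ} (h : IsAltExpansion m r β)
    (hb : ∀ i < r, β i < b) (hm : m ≤ 2 ^ b) :
    IsAltExpansion (2 ^ b - m) (r + 1) fun i => if i = 0 then b else β (i - 1) := by
  refine ⟨fun i j hij hj => ?_, ?_⟩
  · rcases Nat.eq_zero_or_pos i with rfl | hi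
    · simpa [hij.ne'] using hb (j - 1) (by omega)
    · simpa [hi.ne', (hi.trans hij).ne'] using h.1 (i - 1) (j - 1) (by omega) (by omega)
  · change _ = altSum _ (r + 1)
    rw [altSum_succ]
    simp only [if_true, Nat.add_one_ne_zero, if_false, Nat.add_sub_cancel]
    push_cast [hm]
    rw [h.2]
    rfl

theorem IsConsOnesExpansion.tail {n r : ℕ} {β : ℕ → ℕ} (h : IsConsOnesExpansion n (r + 1) β) :
    n ≤ 2 ^ β 0 ∧ 2 * (2 ^ β 0 - n) < 2 ^ β 0 ∧
      IsConsOnesExpansion (2 ^ β 0 - n) r fun i => β (i + 1) := by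
  obtain ⟨hn, hn2, htail⟩ := h.1.tail
  -- Otherwise `n = 2 ^ (β 0 - 1)` has an expansion of length one, so `r = 0` and `2 ^ β 0 - n = 0`.
  have hstrict : 2 * (2 ^ β 0 - n) < 2 ^ β 0 := by
    by_contra hge
    obtain ⟨b, hb⟩ : ∃ b, β 0 = b + 1 := Nat.exists_eq_succ_of_ne_zero fun h0 => by
      rw [h0] at hge hn2; omega
    have hn' : n = 2 ^ b := by rw [hb, pow_succ] at hn hn2 hge; omega
    have hr : r = 0 := by have := h.2 1 _ (hn' ▸ isAltExpansion_two_pow b); omega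
    subst hr
    have : ((2 ^ β 0 - n : ℕ) : ℤ) = 0 := htail.2
    have : 0 < 2 ^ β 0 := by positivity
    omega
  -- Prepending `β 0` to a shorter expansion of `2 ^ β 0 - n` would give a shorter one of `n`.
  refine ⟨hn, hstrict, htail, fun r' β' h' => ?_⟩
  by_contra! hlt
  cases r' with
  | zero =>
    have hn' : n = 2 ^ β 0 := by have : ((2 ^ β 0 - n : ℕ) : ℤ) = 0 := h'.2; omega
    have := h.2 1 _ (hn' ▸ isAltExpansion_two_pow (β 0))
    omega
  | succ r' =>
    obtain ⟨-, hm2, -⟩ := h'.tail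
    have hβ0 : β' 0 < β 0 := by
      by_contra! hle
      have := Nat.pow_le_pow_right (by norm_num : 0 < 2) hle
      omega
    have hβ' : ∀ i < r' + 1, β' i < β 0 := by
      intro i hi
      rcases Nat.eq_zero_or_pos i with rfl | hi0
      · exact hβ0
      · exact (h'.1 0 i hi0 hi).trans hβ0
    have hcons := h'.cons hβ' (Nat.sub_le _ _)
    rw [Nat.sub_sub_self hn] at hcons
    have := h.2 _ _ hcons
    omega

def tensorSquareBlocks (β : ℕ → ℕ) (r : ℕ) : Multiset ℕ :=
  ∑ k ∈ Finset.range r,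
    Multiset.replicate
      ((2 ^ (β k) + ∑ i ∈ Finset.Ico (k + 1) r, (-1 : ℤ) ^ (k + i) * 2 ^ (β i + 1)).toNat)
      (2 ^ (β k))

theorem mem_tensorSquareBlocks {β : ℕ → ℕ} {r s : ℕ} (hs : s ∈ tensorSquareBlocks β r) :
    ∃ k < r, s = 2 ^ β k := by
  obtain ⟨k, hk, hs⟩ := Multiset.mem_sum.mp hs
  exact ⟨k, Finset.mem_range.mp hk, Multiset.eq_of_mem_replicate hs⟩

theorem tensorSquareBlocks_succ {β : ℕ → ℕ} {r m : ℕ} (hm : altSum (fun i => β (i + 1)) r = m) :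
    tensorSquareBlocks β (r + 1) =
      Multiset.replicate (2 ^ β 0 - 2 * m) (2 ^ β 0) +
        tensorSquareBlocks (fun i => β (i + 1)) r := by
  rw [tensorSquareBlocks, Finset.sum_range_succ', add_comm]
  congr 1
  · have hsum : ∑ i ∈ Finset.Ico (0 + 1) (r + 1), (-1 : ℤ) ^ (0 + i) * 2 ^ (β i + 1) =
        -2 * altSum (fun i => β (i + 1)) r := by
      rw [← Finset.sum_Ico_add', ← Finset.range_eq_Ico, altSum, Finset.mul_sum]
      refine Finset.sum_congr rfl fun i _ => ?_
      ring
    rw [hsum, hm, ← Int.toNat_sub]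
    congr 1
  · refine Finset.sum_congr rfl fun k _ => ?_
    rw [← Finset.sum_Ico_add']
    congr 3
    refine Finset.sum_congr rfl fun i _ => ?_
    ring

end ConsOnesExpansion

theorem jordanType_tensorSquare [CharP K 2] (n r : ℕ) (β : ℕ → ℕ)
    (h : IsConsOnesExpansion n r β) :
    HasJordanType (tensorSquareAction K n)
      (∑ k ∈ Finset.range r,
        Multiset.replicate
          ((2 ^ (β k) + ∑ i ∈ Finset.Ico (k + 1) r,
            (-1 : ℤ) ^ (k + i) * 2 ^ (β i + 1)).toNat)
          (2 ^ (β k))) := by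
  change HasJordanType _ (tensorSquareBlocks β r)
  induction n using Nat.strong_induction_on generalizing r β with
  | _ n ih =>
  cases r with
  | zero =>
    obtain rfl : n = 0 := by simpa using h.1.2
    rw [tensorSquareBlocks, Finset.sum_range_zero]
    exact hasJordanType_zero_of_finrank_eq_zero (by simp [Module.finrank_tensorProduct]) _
  | succ r =>
    obtain ⟨hn, hm, htail⟩ := h.tail
    rw [tensorSquareBlocks_succ htail.1.2.symm]
    refine (ih _ (by omega) r _ htail).tensorSquareAction_of_add_eq_prime_pow Nat.prime_two
      (Nat.sub_add_cancel hn) (by omega) fun s hs => ?_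
    obtain ⟨k, hk, rfl⟩ := mem_tensorSquareBlocks hs
    exact Nat.pow_le_pow_right (by norm_num) (h.1.1 0 (k + 1) (by omega) (by omega)).le

end
end

section
/- Let K be a field of characteristic 2 and let e act on W_n = K^n as a single nilpotent Jordan block. Then the induced nilpotent action of e on S²(W_n) has exactly n Jordan blocks; equivalently, the kernel of e acting on S²(W_n) is n-dimensional. -/
open TensorProduct

noncomputable section

variable (K : Type*) [Field K]

/-- The kernel of the natural surjection `V ⊗ V → Λ²(V)`, namely the span of the
vectors `v ⊗ v`.  In characteristic two `Λ²(V) ≅ (V ⊗ V) / altSubmodule K V`. -/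
def altSubmodule (V : Type*) [AddCommGroup V] [Module K V] : Submodule K (V ⊗[K] V) :=
  Submodule.span K {x | ∃ v : V, x = v ⊗ₜ[K] v}

/-- The kernel of the natural surjection `V ⊗ V → S²(V)`, namely the span of the
vectors `v ⊗ w - w ⊗ v`.  Thus `S²(V) ≅ (V ⊗ V) / symSubmodule K V`. -/
def symSubmodule (V : Type*) [AddCommGroup V] [Module K V] : Submodule K (V ⊗[K] V) :=
  Submodule.span K {x | ∃ v w : V, x = v ⊗ₜ[K] w - w ⊗ₜ[K] v}


/-!
In characteristic 2 the derivation kills every square: `e(v²) = 2 v·ev = 0`. So the squares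
`x_i²` of the basis vectors, which are linearly independent, lie in the kernel. Conversely, write
`q = ∑ c_{ij} x_i x_j`. Since `e x_{i+1} = x_i`, the coefficient of `x_i x_j` (`i < j`) in `e q` is
`c_{i+1,j} + c_{i,j+1}`, except that for `j = i + 1` the term `x_{i+1}²` contributes
`2 c_{i+1,i+1} = 0`, while the coefficient of `x_i²` is `c_{i,i+1}`. If `e q = 0`, these relations
kill every `c_{ij}` with `i < j`, one antidiagonal `j - i` at a time, so the kernel is spanned by
the squares and has dimension `n`. The number of Jordan blocks is the dimension of the kernel.
-/

theorem eq_zero_of_lt_of_recurrence {M : Type*} [AddMonoid M] {c : ℕ → ℕ → M}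
    (h₁ : ∀ i, c i (i + 1) = 0) (h₂ : ∀ i, c i (i + 2) = 0)
    (h : ∀ i j, i + 1 < j → c (i + 1) j + c i (j + 1) = 0) {i j : ℕ} (hij : i < j) :
    c i j = 0 := by
  suffices ∀ d i, c i (i + d + 1) = 0 by
    simpa [show i + (j - i - 1) + 1 = j by omega] using this (j - i - 1) i
  intro d
  induction d using Nat.twoStepInduction with
  | zero => exact h₁
  | one => exact h₂
  | more d hd _ =>
    intro i
    simpa [hd (i + 1), show i + 1 + d + 1 + 1 = i + (d + 2) + 1 by omega]
      using h i (i + 1 + d + 1) (by omega)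

theorem Multiset.sum_map_min_one (M : Multiset ℕ) :
    (M.map fun s => min s 1).sum = Multiset.card (M.filter (0 < ·)) := by
  induction M using Multiset.induction_on with
  | empty => simp
  | cons a M ih => cases a <;> simp [ih, add_comm]

abbrev SymSquare (V : Type*) [AddCommGroup V] [Module K V] := V ⊗[K] V ⧸ symSubmodule K V

section SymSquare

variable {K} {V : Type*} [AddCommGroup V] [Module K V]

theorem symSubmodule_le_comap_rTensor_add_lTensor (g : V →ₗ[K] V) :
    symSubmodule K V ≤ (symSubmodule K V).comap (g.rTensor V + g.lTensor V) := by
  rw [symSubmodule, Submodule.span_le]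
  rintro _ ⟨v, w, rfl⟩
  have h := add_mem
    (Submodule.subset_span ⟨g v, w, rfl⟩ : g v ⊗ₜ w - w ⊗ₜ g v ∈ symSubmodule K V)
    (Submodule.subset_span ⟨v, g w, rfl⟩)
  simp only [SetLike.mem_coe, Submodule.mem_comap, map_sub, LinearMap.add_apply,
    LinearMap.rTensor_tmul, LinearMap.lTensor_tmul]
  convert h using 1
  abel

def symSquareMap (g : V →ₗ[K] V) : SymSquare K V →ₗ[K] SymSquare K V :=
  (symSubmodule K V).mapQ (symSubmodule K V) (g.rTensor V + g.lTensor V)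
    (symSubmodule_le_comap_rTensor_add_lTensor g)

theorem symSquareMap_mk (g : V →ₗ[K] V) (x : V ⊗[K] V) :
    symSquareMap g (Submodule.Quotient.mk x) =
      Submodule.Quotient.mk ((g.rTensor V + g.lTensor V) x) :=
  rfl

theorem symSquareMap_mk_tmul_self [CharP K 2] (g : V →ₗ[K] V) (v : V) :
    symSquareMap g (Submodule.Quotient.mk (v ⊗ₜ v)) = 0 := by
  rw [symSquareMap_mk, Submodule.Quotient.mk_eq_zero]
  have h : (g.rTensor V + g.lTensor V) (v ⊗ₜ v) =
      (g v ⊗ₜ v - v ⊗ₜ g v) + (2 : K) • (v ⊗ₜ g v) := by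
    simp only [LinearMap.add_apply, LinearMap.rTensor_tmul, LinearMap.lTensor_tmul, two_smul]
    abel
  rw [h, CharTwo.two_eq_zero, zero_smul, add_zero]
  exact Submodule.subset_span ⟨g v, v, rfl⟩

end SymSquare

section JordanBlock

variable {K} {n : ℕ}

/- Coordinates are indexed by `ℕ` and vanish from `n` on, so that the Jordan block acts on them
by the shift `i ↦ i + 1` with no boundary cases. -/
variable (K) in
def coord (n i : ℕ) : (Fin n → K) →ₗ[K] K :=
  if h : i < n then LinearMap.proj ⟨i, h⟩ else 0

theorem coord_val (i : Fin n) (v : Fin n → K) : coord K n i v = v i := by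
  simp [coord]

theorem coord_jordanShift (i : ℕ) (v : Fin n → K) :
    coord K n i (jordanShift K n v) = coord K n (i + 1) v := by
  unfold coord
  by_cases h : i + 1 < n
  · simp [h, show i < n by omega, jordanShift]
  · by_cases h' : i < n <;> simp [h, h', jordanShift]

variable (K) in
def tensorCoeff (n i j : ℕ) : (Fin n → K) ⊗[K] (Fin n → K) →ₗ[K] K :=
  TensorProduct.lift ((LinearMap.mul K K).compl₁₂ (coord K n i) (coord K n j))

theorem tensorCoeff_tmul (i j : ℕ) (v w : Fin n → K) :
    tensorCoeff K n i j (v ⊗ₜ w) = coord K n i v * coord K n j w :=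
  rfl

theorem tensorCoeff_tensorSquareAction (i j : ℕ) (x : (Fin n → K) ⊗[K] (Fin n → K)) :
    tensorCoeff K n i j (tensorSquareAction K n x) =
      tensorCoeff K n (i + 1) j x + tensorCoeff K n i (j + 1) x := by
  induction x using TensorProduct.induction_on with
  | zero => simp
  | tmul v w => simp [tensorSquareAction, tensorCoeff_tmul, coord_jordanShift]
  | add x y hx hy => simp only [map_add, hx, hy]; ring

theorem sum_tensorCoeff_smul_single_tmul_single (x : (Fin n → K) ⊗[K] (Fin n → K)) :
    ∑ i : Fin n, ∑ j : Fin n, tensorCoeff K n i j x • (Pi.single i 1 ⊗ₜ Pi.single j 1) = x := by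
  let b := (Pi.basisFun K (Fin n)).tensorProduct (Pi.basisFun K (Fin n))
  have hb : ∀ i j : Fin n, tensorCoeff K n i j = b.coord (i, j) := fun i j =>
    TensorProduct.ext' fun v w => by
      simp [b, tensorCoeff_tmul, coord_val, Module.Basis.tensorProduct_repr_tmul_apply, mul_comm]
  conv_rhs => rw [← b.sum_repr x, Fintype.sum_prod_type]
  simp [hb, b, Module.Basis.tensorProduct_apply]

theorem symSquareMap_jordanShift_mk (x : (Fin n → K) ⊗[K] (Fin n → K)) :
    symSquareMap (jordanShift K n) (Submodule.Quotient.mk x) =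
      Submodule.Quotient.mk (tensorSquareAction K n x) :=
  rfl

variable (K) in
def symSquareCoeff (n i j : ℕ) : SymSquare K (Fin n → K) →ₗ[K] K :=
  (symSubmodule K (Fin n → K)).liftQ
    (if i = j then tensorCoeff K n i i else tensorCoeff K n i j + tensorCoeff K n j i) <| by
      rw [symSubmodule, Submodule.span_le]
      rintro _ ⟨v, w, rfl⟩
      split_ifs <;> simp [tensorCoeff_tmul] <;> ring

theorem symSquareCoeff_mk (i j : ℕ) (x : (Fin n → K) ⊗[K] (Fin n → K)) :
    symSquareCoeff K n i j (Submodule.Quotient.mk x) =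
      if i = j then tensorCoeff K n i i x else tensorCoeff K n i j x + tensorCoeff K n j i x := by
  unfold symSquareCoeff
  split_ifs <;> rfl

theorem symSquareCoeff_mk_single_tmul_single (i j : Fin n) :
    symSquareCoeff K n i i (Submodule.Quotient.mk (Pi.single j 1 ⊗ₜ Pi.single j 1)) =
      (Pi.single j 1 : Fin n → K) i := by
  simp [symSquareCoeff_mk, tensorCoeff_tmul, coord_val, Pi.single_apply]

theorem symSquareCoeff_symSquareMap_self (i : ℕ) (q : SymSquare K (Fin n → K)) :
    symSquareCoeff K n i i (symSquareMap (jordanShift K n) q) =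
      symSquareCoeff K n i (i + 1) q := by
  obtain ⟨x, rfl⟩ := Submodule.Quotient.mk_surjective _ q
  simp only [symSquareMap_jordanShift_mk, symSquareCoeff_mk, if_true, if_neg (Nat.ne_add_one i),
    tensorCoeff_tensorSquareAction, add_comm]

theorem symSquareCoeff_symSquareMap_succ [CharP K 2] (i : ℕ) (q : SymSquare K (Fin n → K)) :
    symSquareCoeff K n i (i + 1) (symSquareMap (jordanShift K n) q) =
      symSquareCoeff K n i (i + 2) q := by
  obtain ⟨x, rfl⟩ := Submodule.Quotient.mk_surjective _ q
  simp only [symSquareMap_jordanShift_mk, symSquareCoeff_mk, tensorCoeff_tensorSquareAction,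
    if_neg (Nat.ne_add_one i), if_neg (show i ≠ i + 2 by omega)]
  linear_combination (tensorCoeff K n (i + 1) (i + 1) x) * CharTwo.two_eq_zero (R := K)

theorem symSquareCoeff_symSquareMap_of_succ_lt {i j : ℕ} (hij : i + 1 < j)
    (q : SymSquare K (Fin n → K)) :
    symSquareCoeff K n i j (symSquareMap (jordanShift K n) q) =
      symSquareCoeff K n (i + 1) j q + symSquareCoeff K n i (j + 1) q := by
  obtain ⟨x, rfl⟩ := Submodule.Quotient.mk_surjective _ q
  simp only [symSquareMap_jordanShift_mk, symSquareCoeff_mk, tensorCoeff_tensorSquareAction,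
    if_neg (show i ≠ j by omega), if_neg (show i + 1 ≠ j by omega),
    if_neg (show i ≠ j + 1 by omega)]
  ring

theorem symSquareCoeff_eq_zero_of_symSquareMap_eq_zero [CharP K 2]
    {q : SymSquare K (Fin n → K)} (hq : symSquareMap (jordanShift K n) q = 0) {i j : ℕ}
    (hij : i < j) : symSquareCoeff K n i j q = 0 := by
  refine eq_zero_of_lt_of_recurrence (c := fun i j => symSquareCoeff K n i j q) (fun i => ?_)
    (fun i => ?_) (fun i j h => ?_) hij
  · rw [← symSquareCoeff_symSquareMap_self, hq, map_zero]
  · rw [← symSquareCoeff_symSquareMap_succ, hq, map_zero]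
  · rw [← symSquareCoeff_symSquareMap_of_succ_lt h, hq, map_zero]

theorem eq_zero_of_symSquareCoeff_eq_zero {q : SymSquare K (Fin n → K)}
    (hdiag : ∀ i : Fin n, symSquareCoeff K n i i q = 0)
    (hlt : ∀ i j : Fin n, i < j → symSquareCoeff K n i j q = 0) : q = 0 := by
  obtain ⟨x, rfl⟩ := Submodule.Quotient.mk_surjective _ q
  rw [Submodule.Quotient.mk_eq_zero]
  -- the coefficient matrix of `x` is `U - Uᵀ` for its strictly upper triangular part `U`
  let U : Fin n → Fin n → K := fun i j => if i < j then tensorCoeff K n i j x else 0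
  have hU : ∀ i j : Fin n, tensorCoeff K n i j x = U i j - U j i := by
    intro i j
    rcases lt_trichotomy i j with h | rfl | h
    · simp [U, h, h.not_gt]
    · simpa [U, symSquareCoeff_mk] using hdiag i
    · have hji := hlt j i h
      rw [symSquareCoeff_mk, if_neg (Fin.val_ne_of_ne h.ne)] at hji
      simp only [U, if_neg h.not_gt, if_pos h, zero_sub]
      linear_combination hji
  let e : Fin n → Fin n → (Fin n → K) ⊗[K] (Fin n → K) := fun i j =>
    Pi.single i 1 ⊗ₜ Pi.single j 1
  have hx : x = ∑ i, ∑ j, U i j • (e i j - e j i) := calc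
    x = ∑ i : Fin n, ∑ j : Fin n, tensorCoeff K n i j x • e i j :=
      (sum_tensorCoeff_smul_single_tmul_single x).symm
    _ = ∑ i, ∑ j, U i j • e i j - ∑ i, ∑ j, U j i • e i j := by
      simp only [hU, ← Finset.sum_sub_distrib]
      exact Finset.sum_congr rfl fun i _ => Finset.sum_congr rfl fun j _ =>
        sub_smul (U i j) (U j i) (e i j)
    _ = ∑ i, ∑ j, U i j • e i j - ∑ i, ∑ j, U i j • e j i := by
      rw [Finset.sum_comm (f := fun i j => U j i • e i j)]
    _ = ∑ i, ∑ j, U i j • (e i j - e j i) := by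
      simp only [smul_sub, Finset.sum_sub_distrib]
  rw [hx]
  exact Submodule.sum_mem _ fun i _ => Submodule.sum_mem _ fun j _ =>
    Submodule.smul_mem _ _ (Submodule.subset_span ⟨_, _, rfl⟩)

theorem finrank_ker_symSquareMap_jordanShift [CharP K 2] :
    Module.finrank K (LinearMap.ker (symSquareMap (jordanShift K n))) = n := by
  let F := symSquareMap (jordanShift K n)
  let sq : Fin n → LinearMap.ker F := fun i =>
    ⟨Submodule.Quotient.mk (Pi.single i 1 ⊗ₜ Pi.single i 1), symSquareMap_mk_tmul_self _ _⟩
  let diagCoeffs := (LinearMap.pi fun i : Fin n => symSquareCoeff K n i i).domRestrict F.ker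
  have hinj : Function.Injective diagCoeffs := by
    rw [← LinearMap.ker_eq_bot, Submodule.eq_bot_iff]
    rintro ⟨q, hq⟩ hdiag
    ext1
    exact eq_zero_of_symSquareCoeff_eq_zero (fun i => congr_fun hdiag i)
      (fun i j hij => symSquareCoeff_eq_zero_of_symSquareMap_eq_zero hq hij)
  have hsurj : Function.Surjective diagCoeffs := fun c => ⟨∑ i, c i • sq i, by
    ext j
    simp [diagCoeffs, sq, symSquareCoeff_mk_single_tmul_single, Pi.single_apply]⟩
  rw [(LinearEquiv.ofBijective diagCoeffs ⟨hinj, hsurj⟩).finrank_eq, Module.finrank_fin_fun]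

end JordanBlock

/-- The derivation action of the regular nilpotent `e` on `S²(W_n)` has exactly `n`
Jordan blocks; equivalently, its kernel is `n`-dimensional. -/
theorem symmetricSquare_numBlocks [CharP K 2] (n : ℕ)
    (f : (((Fin n → K) ⊗[K] (Fin n → K)) ⧸ symSubmodule K (Fin n → K)) →ₗ[K]
        (((Fin n → K) ⊗[K] (Fin n → K)) ⧸ symSubmodule K (Fin n → K)))
    (hf : ∀ x, f (Submodule.Quotient.mk x) =
        Submodule.Quotient.mk (tensorSquareAction K n x)) :
    (∀ M : Multiset ℕ, HasJordanType f M → Multiset.card (M.filter (0 < ·)) = n) ∧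
      Module.finrank K (LinearMap.ker f) = n := by
  obtain rfl : f = symSquareMap (jordanShift K n) :=
    Submodule.linearMap_qext _ (LinearMap.ext hf)
  refine ⟨fun M hM => ?_, finrank_ker_symSquareMap_jordanShift⟩
  rw [← Multiset.sum_map_min_one, ← hM 1, pow_one, finrank_ker_symSquareMap_jordanShift]

end
end

section
/- Let K be a field of characteristic 2 and let e : V → V be a nilpotent linear map on a finite-dimensional K-vector space V. Let e act on S²(V) and Λ²(V) as derivations, and let S²(V)^e denote the kernel of e on S²(V). If the subspace V^{[2]} spanned by {v² : v ∈ V} equals S²(V)^e, then Λ²(V) ≅ S²(V)/S²(V)^e as modules over the algebra generated by e; in particular, if e has Jordan blocks of sizes r_1, ..., r_t on S²(V), then e has Jordan blocks of sizes r_1 − 1, ..., r_t − 1 on Λ²(V) (blocks of size 0 being discarded). -/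
/-!
In characteristic two `v ⊗ w - w ⊗ v = (v + w) ⊗ (v + w) - v ⊗ v - w ⊗ w`, so `Λ²(V)` is the
quotient of `S²(V)` by the image `V^{[2]}` of the squares; when this image is `S²(V)^e`, the
third isomorphism theorem identifies `Λ²(V)` with `S²(V) ⧸ ker e`, compatibly with `e`.
For any endomorphism `f` of `U`, the kernel of `f̄ᵐ` on `U ⧸ ker f` is the image of
`ker f^(m+1)`, so `dim ker f̄ᵐ = dim ker f^(m+1) - dim ker f`; in terms of block sizes this is
`∑ min rᵢ (m+1) - ∑ min rᵢ 1 = ∑ min (rᵢ - 1) m`.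
-/

open TensorProduct

noncomputable section

variable (K : Type*) [Field K]

theorem Multiset.sum_map_min_tsub_one_add_sum_map_min_one (M : Multiset ℕ) (m : ℕ) :
    (((M.map (· - 1)).filter (0 < ·)).map (min · m)).sum + (M.map (min · 1)).sum =
      (M.map (min · (m + 1))).sum := by
  induction M using Multiset.induction with
  | empty => simp
  | cons a M ih =>
    rw [Multiset.map_cons, Multiset.filter_cons, Multiset.map_cons, Multiset.sum_cons,
      Multiset.map_cons, Multiset.sum_cons]
    split_ifs with ha
    · rw [Multiset.singleton_add, Multiset.map_cons, Multiset.sum_cons]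
      omega
    · rw [zero_add]
      omega

section

variable {K} {N P : Type*} [AddCommGroup N] [Module K N] [AddCommGroup P] [Module K P]

theorem Submodule.finrank_map_mkQ_add_finrank {p W : Submodule K N} [FiniteDimensional K W]
    (h : p ≤ W) :
    Module.finrank K (W.map p.mkQ) + Module.finrank K p = Module.finrank K W := by
  have := LinearMap.finrank_range_add_finrank_ker (p.mkQ ∘ₗ W.subtype)
  rwa [LinearMap.range_comp, Submodule.range_subtype, LinearMap.ker_comp, Submodule.ker_mkQ,
    (Submodule.comapSubtypeEquivOfLe h).finrank_eq] at this

theorem HasJordanType.of_comp_eq_comp {f : Module.End K N} {g : Module.End K P} (φ : N ≃ₗ[K] P)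
    (hφ : φ.toLinearMap ∘ₗ f = g ∘ₗ φ.toLinearMap) {M : Multiset ℕ} (hf : HasJordanType f M) :
    HasJordanType g M := by
  have hg : g = φ.conjAlgEquiv K f := by
    ext x
    simpa using (LinearMap.congr_fun hφ (φ.symm x)).symm
  intro m
  rw [← hf m, hg, ← map_pow, LinearEquiv.conjAlgEquiv_apply, LinearEquiv.ker_comp,
    LinearMap.ker_comp, Submodule.comap_equiv_eq_map_symm, LinearEquiv.symm_symm,
    LinearEquiv.finrank_map_eq]

def Module.End.quotKer (f : Module.End K N) : Module.End K (N ⧸ LinearMap.ker f) :=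
  (LinearMap.ker f).mapQ _ f fun x hx => by simp [LinearMap.mem_ker.1 hx]

theorem Module.End.quotKer_mk (f : Module.End K N) (x : N) :
    f.quotKer (Submodule.Quotient.mk x) = Submodule.Quotient.mk (f x) := rfl

theorem Module.End.quotKer_pow_comp_mkQ (f : Module.End K N) (m : ℕ) :
    (f.quotKer ^ m) ∘ₗ (LinearMap.ker f).mkQ = (LinearMap.ker f).mkQ ∘ₗ f ^ m := by
  rw [Module.End.quotKer, ← Submodule.mapQ_pow]
  rfl

theorem Module.End.ker_quotKer_pow (f : Module.End K N) (m : ℕ) :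
    LinearMap.ker (f.quotKer ^ m) = (LinearMap.ker (f ^ (m + 1))).map (LinearMap.ker f).mkQ := by
  rw [← Submodule.map_comap_eq_of_surjective (Submodule.mkQ_surjective _)
      (LinearMap.ker (f.quotKer ^ m)), ← LinearMap.ker_comp, f.quotKer_pow_comp_mkQ,
    LinearMap.ker_comp, Submodule.ker_mkQ, ← LinearMap.ker_comp, pow_succ']
  rfl

theorem HasJordanType.quotKer [FiniteDimensional K N] {f : Module.End K N} {M : Multiset ℕ}
    (hf : HasJordanType f M) :
    HasJordanType f.quotKer ((M.map (· - 1)).filter (0 < ·)) := by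
  intro m
  have hle : LinearMap.ker f ≤ LinearMap.ker (f ^ (m + 1)) := by
    rw [pow_succ]
    exact LinearMap.ker_le_ker_comp _ _
  have hrank := Submodule.finrank_map_mkQ_add_finrank hle
  have hker := hf 1
  rw [pow_one] at hker
  rw [← f.ker_quotKer_pow, hf (m + 1), hker] at hrank
  have := Multiset.sum_map_min_tsub_one_add_sum_map_min_one M m
  omega

end

theorem symSubmodule_le_altSubmodule [CharP K 2] (V : Type*) [AddCommGroup V] [Module K V] :
    symSubmodule K V ≤ altSubmodule K V := by
  rw [symSubmodule, Submodule.span_le]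
  rintro _ ⟨v, w, rfl⟩
  have hvw : v ⊗ₜ[K] w - w ⊗ₜ[K] v = (v + w) ⊗ₜ[K] (v + w) - v ⊗ₜ[K] v - w ⊗ₜ[K] w := by
    rw [sub_eq_add_neg, ← neg_one_smul K (w ⊗ₜ[K] v), CharTwo.neg_eq, one_smul]
    simp only [TensorProduct.tmul_add, TensorProduct.add_tmul]
    abel
  rw [SetLike.mem_coe, hvw]
  exact sub_mem (sub_mem (Submodule.subset_span ⟨v + w, rfl⟩)
    (Submodule.subset_span ⟨v, rfl⟩)) (Submodule.subset_span ⟨w, rfl⟩)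

theorem exteriorSquare_iso_symmetricSquare_mod_kernel [CharP K 2]
    {V : Type*} [AddCommGroup V] [Module K V] [FiniteDimensional K V]
    (e : V →ₗ[K] V)
    (fS : ((V ⊗[K] V) ⧸ symSubmodule K V) →ₗ[K] ((V ⊗[K] V) ⧸ symSubmodule K V))
    (hfS : ∀ x, fS (Submodule.Quotient.mk x) =
        Submodule.Quotient.mk ((LinearMap.rTensor V e + LinearMap.lTensor V e) x))
    (fA : ((V ⊗[K] V) ⧸ altSubmodule K V) →ₗ[K] ((V ⊗[K] V) ⧸ altSubmodule K V))
    (hfA : ∀ x, fA (Submodule.Quotient.mk x) =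
        Submodule.Quotient.mk ((LinearMap.rTensor V e + LinearMap.lTensor V e) x))
    (hker : Submodule.map (symSubmodule K V).mkQ (altSubmodule K V) = LinearMap.ker fS) :
    (∃ φ : (((V ⊗[K] V) ⧸ symSubmodule K V) ⧸ LinearMap.ker fS) ≃ₗ[K]
        ((V ⊗[K] V) ⧸ altSubmodule K V),
      ∀ y, φ (Submodule.Quotient.mk (fS y)) = fA (φ (Submodule.Quotient.mk y))) ∧
    ∀ M : Multiset ℕ, HasJordanType fS M →
      HasJordanType fA ((M.map (fun s => s - 1)).filter (0 < ·)) := by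
  let φ : (((V ⊗[K] V) ⧸ symSubmodule K V) ⧸ LinearMap.ker fS) ≃ₗ[K]
      ((V ⊗[K] V) ⧸ altSubmodule K V) :=
    (Submodule.quotEquivOfEq _ _ hker.symm).trans
      (Submodule.quotientQuotientEquivQuotient _ _ (symSubmodule_le_altSubmodule K V))
  have hφ : φ.toLinearMap ∘ₗ Module.End.quotKer fS = fA ∘ₗ φ.toLinearMap := by
    refine LinearMap.ext fun y => ?_
    obtain ⟨x, rfl⟩ := Submodule.mkQ_surjective _ y
    obtain ⟨z, rfl⟩ := Submodule.mkQ_surjective _ x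
    rw [LinearMap.comp_apply, Submodule.mkQ_apply, Module.End.quotKer_mk, Submodule.mkQ_apply,
      hfS]
    exact (hfA z).symm
  exact ⟨⟨φ, fun y => LinearMap.congr_fun hφ (Submodule.Quotient.mk y)⟩,
    fun M hM => hM.quotKer.of_comp_eq_comp φ hφ⟩

end
end
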